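/- Every local maximum of E_0(x_1,...,x_n) = (1/n) Σ_{i,j} ⟨x_i,x_j⟩ over (S^{d-1})^n is a global maximum; that is, any critical point of E_0 that is not of the form x_1 = x_2 = ... = x_n is a strict saddle point (the Hessian has a strictly positive eigenvalue). -/

import Mathlib

open Set
open scoped RealInnerProductSpace

/-- The `β = 0` interaction energy `E_0(x) = (1/n) Σ_{i,j} ⟨x_i, x_j⟩`. -/
noncomputable def E0 {d n : ℕ} (x : Fin n → EuclideanSpace ℝ (Fin d)) : ℝ :=
  (1 / (n : ℝ)) * ∑ i, ∑ j, ⟪x i, x j⟫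

/-- Every local maximum of `E_0` on `(S^{d-1})^n` is global: any critical point
(vanishing tangential gradient) at which the points are not all equal is a strict
saddle point, i.e. there is a smooth curve on `(S^{d-1})^n` through it along which
`E_0` has vanishing first derivative and strictly positive second derivative. -/
theorem stmt_12 {d n : ℕ} (hd : 2 ≤ d) (hn : 2 ≤ n)
    (x : Fin n → EuclideanSpace ℝ (Fin d))
    (hsphere : ∀ i, x i ∈ Metric.sphere (0 : EuclideanSpace ℝ (Fin d)) 1)
    (hcrit : ∀ i, (∑ j, x j) - ⟪x i, ∑ j, x j⟫ • x i = 0)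
    (hneq : ¬ ∀ i j, x i = x j) :
    ∃ γ : ℝ → Fin n → EuclideanSpace ℝ (Fin d),
      (∀ i, ContDiff ℝ (⊤ : ℕ∞) (fun t => γ t i)) ∧
      (∀ t i, γ t i ∈ Metric.sphere (0 : EuclideanSpace ℝ (Fin d)) 1) ∧
      γ 0 = x ∧
      deriv (fun t => E0 (γ t)) 0 = 0 ∧
      0 < deriv (deriv (fun t => E0 (γ t))) 0 := by
  have hnorm : ∀ i, ‖x i‖ = 1 := by
    intro i; simpa using hsphere i
  set s : EuclideanSpace ℝ (Fin d) := ∑ j, x j with hs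
  have hcrit' : ∀ i, s = ⟪x i, s⟫ • x i := by
    intro i; have := hcrit i; rwa [sub_eq_zero] at this
  -- find k with ⟪x k, s⟫ < 1
  obtain ⟨k, hk⟩ : ∃ k, ⟪x k, s⟫ < 1 := by
    by_contra h
    push_neg at h
    apply hneq
    have key : ∀ i, x i = ‖s‖⁻¹ • s := by
      intro i
      have hc : (0:ℝ) < ⟪x i, s⟫ := lt_of_lt_of_le one_pos (h i)
      have hns : ‖s‖ = ⟪x i, s⟫ := by
        have := hcrit' i
        calc ‖s‖ = ‖⟪x i, s⟫ • x i‖ := by rw [← this]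
        _ = |⟪x i, s⟫| * ‖x i‖ := by rw [norm_smul, Real.norm_eq_abs]
        _ = ⟪x i, s⟫ := by rw [abs_of_pos hc, hnorm i, mul_one]
      have hci : s = ⟪x i, s⟫ • x i := hcrit' i
      have : ‖s‖⁻¹ • s = x i := by
        calc ‖s‖⁻¹ • s = ⟪x i, s⟫⁻¹ • (⟪x i, s⟫ • x i) := by rw [hns, ← hci]
        _ = x i := by rw [smul_smul, inv_mul_cancel₀ (ne_of_gt hc), one_smul]
      exact this.symm
    intro i j; rw [key i, key j]
  -- find unit v orthogonal to x k
  have hxk0 : x k ≠ 0 := by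
    intro h0; have := hnorm k; rw [h0] at this; simp at this
  obtain ⟨v, hv1, hvperp⟩ :
      ∃ v : EuclideanSpace ℝ (Fin d), ‖v‖ = 1 ∧ ⟪x k, v⟫ = 0 := by
    have hfr : Module.finrank ℝ (ℝ ∙ x k)ᗮ + 1 = d := by
      have h1 := Submodule.finrank_add_finrank_orthogonal (K := (ℝ ∙ x k))
      rw [finrank_span_singleton hxk0, finrank_euclideanSpace_fin] at h1
      omega
    have hne : ((ℝ ∙ x k)ᗮ : Submodule ℝ (EuclideanSpace ℝ (Fin d))) ≠ ⊥ := by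
      intro hbot
      rw [hbot, finrank_bot] at hfr
      omega
    obtain ⟨v0, hv0mem, hv0ne⟩ := Submodule.exists_mem_ne_zero_of_ne_bot hne
    refine ⟨‖v0‖⁻¹ • v0, ?_, ?_⟩
    · rw [norm_smul, norm_inv, norm_norm, inv_mul_cancel₀ (norm_ne_zero_iff.2 hv0ne)]
    · rw [real_inner_smul_right]
      have : ⟪x k, v0⟫ = 0 :=
        hv0mem (x k) (Submodule.mem_span_singleton_self (x k))
      rw [this, mul_zero]
  set c : ℝ := ⟪x k, s⟫ with hc
  -- the curve
  set γ : ℝ → Fin n → EuclideanSpace ℝ (Fin d) := fun t i =>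
    if i = k then Real.cos t • x k + Real.sin t • v else x i with hγ
  have hxx : ⟪x k, x k⟫ = (1:ℝ) := by
    rw [real_inner_self_eq_norm_mul_norm, hnorm k, mul_one]
  have hvv : ⟪v, v⟫ = (1:ℝ) := by
    rw [real_inner_self_eq_norm_mul_norm, hv1, mul_one]
  have hvx : ⟪v, x k⟫ = (0:ℝ) := by rw [real_inner_comm]; exact hvperp
  have hcurve : ∀ t : ℝ, ‖Real.cos t • x k + Real.sin t • v‖ = 1 := by
    intro t
    have hsq : ‖Real.cos t • x k + Real.sin t • v‖ * ‖Real.cos t • x k + Real.sin t • v‖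
        = 1 := by
      rw [← real_inner_self_eq_norm_mul_norm]
      simp only [inner_add_add_self, real_inner_smul_left, real_inner_smul_right,
        hxx, hvv, hvperp, hvx]
      have := Real.sin_sq_add_cos_sq t
      linear_combination this
    rcases mul_self_eq_one_iff.1 hsq with h | h
    · exact h
    · nlinarith [norm_nonneg (Real.cos t • x k + Real.sin t • v)]
  refine ⟨γ, ?_, ?_, ?_, ?_⟩
  · intro i
    by_cases hik : i = k
    · subst hik
      simp only [hγ, if_pos rfl]
      exact (Real.contDiff_cos.smul contDiff_const).add
        (Real.contDiff_sin.smul contDiff_const)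
    · simp only [hγ, if_neg hik]
      exact contDiff_const
  · intro t i
    rw [mem_sphere_zero_iff_norm]
    by_cases hik : i = k
    · simp only [hγ, if_pos hik]
      exact hcurve t
    · simp only [hγ, if_neg hik]; exact hnorm i
  · funext i
    by_cases hik : i = k
    · subst hik
      simp [hγ]
    · simp [hγ, hik]
  · -- energy along the curve
    have hnR : (0:ℝ) < n := by positivity
    have hEt : (fun t => E0 (γ t)) =
        fun t => (1 / (n:ℝ)) * ((c - 1)^2 + 1) + (2 * (c - 1) / n) * Real.cos t := by
      funext t
      have hS : ∑ i, γ t i = (c - 1 + Real.cos t) • x k + Real.sin t • v := by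
        have hdiff : ∑ i, γ t i = s + (γ t k - x k) := by
          have : ∑ i, γ t i - ∑ i, x i = ∑ i, (γ t i - x i) :=
            (Finset.sum_sub_distrib _ _).symm
          have h2 : ∑ i, (γ t i - x i) = γ t k - x k := by
            apply Finset.sum_eq_single
            · intro j _ hj
              simp [hγ, hj]
            · intro h; exact absurd (Finset.mem_univ k) h
          rw [h2] at this
          rw [← this, hs]
          abel
        rw [hdiff, hcrit' k, ← hc]
        simp only [hγ, if_pos rfl]
        module
      have hdouble : ∑ i, ∑ j, ⟪γ t i, γ t j⟫ = ⟪∑ i, γ t i, ∑ j, γ t j⟫ := by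
        rw [sum_inner]
        exact Finset.sum_congr rfl fun i _ => (inner_sum _ _ _).symm
      show (1 / (n : ℝ)) * ∑ i, ∑ j, ⟪γ t i, γ t j⟫ = _
      rw [hdouble, hS]
      simp only [inner_add_add_self, real_inner_smul_left, real_inner_smul_right,
        hxx, hvv, hvperp, hvx]
      have := Real.sin_sq_add_cos_sq t
      linear_combination (1 / (n:ℝ)) * this
    rw [hEt]
    set A : ℝ := (1 / (n:ℝ)) * ((c - 1)^2 + 1)
    set K : ℝ := 2 * (c - 1) / n with hK
    have hd1 : deriv (fun t => A + K * Real.cos t) = fun t => K * (-Real.sin t) := by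
      funext t
      exact (((Real.hasDerivAt_cos t).const_mul K).const_add A).deriv
    have hd2 : deriv (deriv (fun t => A + K * Real.cos t)) 0 = K * (-Real.cos 0) := by
      rw [hd1]
      exact (((Real.hasDerivAt_sin 0).neg).const_mul K).deriv
    constructor
    · rw [hd1]; simp
    · rw [hd2, Real.cos_zero]
      have : K < 0 := by
        rw [hK]
        apply div_neg_of_neg_of_pos _ hnR
        linarith
      linarith
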